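/- For the matrix A ∈ M₄(ℂ) with A = H + iK, H = diag(0,0,1,1), and K as above (entries k₁, k₂ in positions (1,3),(3,1) and (2,4),(4,2), and r in (3,4),(4,3)), every z ∈ F(A) satisfies 0 ≤ Re z ≤ 1, the point 0 lies on ∂F(A), and f_A⁻¹(0) equals the set of unit vectors in span{e₁, e₂}. -/

import Mathlib

open Matrix

/-- The field of values generating function `f_A(x) = x* A x`. -/
noncomputable def fA {m : Type*} [Fintype m] (A : Matrix m m ℂ) (x : m → ℂ) : ℂ :=
  star x ⬝ᵥ A.mulVec x

/-- The numerical range (field of values) of `A`. -/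
def NR {m : Type*} [Fintype m] (A : Matrix m m ℂ) : Set ℂ :=
  {z | ∃ x, star x ⬝ᵥ x = 1 ∧ fA A x = z}

/-- Euclidean norm on `m → ℂ`. -/
noncomputable def enorm₂ {m : Type*} [Fintype m] (x : m → ℂ) : ℝ :=
  Real.sqrt (∑ i, ‖x i‖ ^ 2)

/-- Projective distance: infimum of `‖x - ω • y‖` over unimodular `ω`. -/
noncomputable def projDist {m : Type*} [Fintype m] (x y : m → ℂ) : ℝ :=
  sInf {d | ∃ ω : ℂ, ‖ω‖ = 1 ∧ d = enorm₂ (x - ω • y)}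

/-!
Since `K` is Hermitian, `x* K x` is real, so `Re f_A(x) = x* H x = |x₃|² + |x₄|²` (the coordinates
`x 2`, `x 3`, indices starting at `0`). For unit `x` this lies in `[0, 1]` and vanishes exactly when
`x₃ = x₄ = 0`, where `f_A` vanishes outright because the upper-left `2 × 2` block of `A` is zero.
Hence `F(A)` lies in the closed right half-plane and contains `0 = f_A(e₁)`, a boundary point of it.
-/

open Complex

section NumericalRange

variable {m : Type*} [Fintype m]

lemma fA_add (A B : Matrix m m ℂ) (x : m → ℂ) : fA (A + B) x = fA A x + fA B x := by
  simp only [fA, add_mulVec, dotProduct_add]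

lemma fA_smul (c : ℂ) (A : Matrix m m ℂ) (x : m → ℂ) : fA (c • A) x = c * fA A x := by
  simp only [fA, smul_mulVec, dotProduct_smul, smul_eq_mul]

lemma re_fA_add_I_smul {H K : Matrix m m ℂ} (hK : K.IsHermitian) (x : m → ℂ) :
    (fA (H + I • K) x).re = (fA H x).re := by
  have hKx : (fA K x).im = 0 := hK.im_star_dotProduct_mulVec_self x
  simp [fA_add, fA_smul, hKx]

lemma fA_diagonal [DecidableEq m] (d : m → ℂ) (x : m → ℂ) :
    fA (diagonal d) x = ∑ i, d i * normSq (x i) := by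
  simp only [fA, mulVec_diagonal, dotProduct, Pi.star_apply, normSq_eq_conj_mul_self]
  exact Finset.sum_congr rfl fun i _ => by simp only [RCLike.star_def]; ring

lemma re_star_dotProduct_self (x : m → ℂ) : (star x ⬝ᵥ x).re = ∑ i, normSq (x i) := by
  simp [dotProduct, normSq_apply, mul_comm]

lemma fA_eq_zero_of_entries_eq_zero {A : Matrix m m ℂ} {x : m → ℂ}
    (h : ∀ i j, x i ≠ 0 → x j ≠ 0 → A i j = 0) : fA A x = 0 := by
  simp only [fA, dotProduct, mulVec, Finset.mul_sum]
  refine Finset.sum_eq_zero fun i _ => Finset.sum_eq_zero fun j _ => ?_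
  by_cases hi : x i = 0
  · simp [hi]
  by_cases hj : x j = 0
  · simp [hj]
  simp [h i j hi hj]

end NumericalRange

lemma mem_frontier_of_subset_re_nonneg {S : Set ℂ} (hS : S ⊆ {z | 0 ≤ z.re}) {z : ℂ}
    (hz : z ∈ S) (hre : z.re = 0) : z ∈ frontier S := by
  refine ⟨subset_closure hz, fun hint => ?_⟩
  have := interior_mono hS hint
  rw [interior_setOfPred_le_re] at this
  exact this.ne' hre

section Concrete

variable (k₁ k₂ r : ℝ)

lemma isHermitian_concreteK :
    (!![0,0,(k₁:ℂ),0; 0,0,0,(k₂:ℂ); (k₁:ℂ),0,0,(r:ℂ); 0,(k₂:ℂ),(r:ℂ),0]).IsHermitian := by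
  ext i j
  fin_cases i <;> fin_cases j <;> simp

lemma re_fA_concrete (x : Fin 4 → ℂ) :
    (fA (diagonal ![0,0,1,1] + I • !![0,0,(k₁:ℂ),0; 0,0,0,(k₂:ℂ); (k₁:ℂ),0,0,(r:ℂ); 0,(k₂:ℂ),(r:ℂ),0]) x).re
      = normSq (x 2) + normSq (x 3) := by
  rw [re_fA_add_I_smul (isHermitian_concreteK k₁ k₂ r), fA_diagonal]
  simp [Fin.sum_univ_four]

lemma fA_concrete_eq_zero {x : Fin 4 → ℂ} (h2 : x 2 = 0) (h3 : x 3 = 0) :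
    fA (diagonal ![0,0,1,1] + I • !![0,0,(k₁:ℂ),0; 0,0,0,(k₂:ℂ); (k₁:ℂ),0,0,(r:ℂ); 0,(k₂:ℂ),(r:ℂ),0]) x = 0 := by
  refine fA_eq_zero_of_entries_eq_zero fun i j hi hj => ?_
  fin_cases i <;> fin_cases j <;> simp_all

end Concrete

theorem concrete_4x4_range_and_preimage_of_zero_general
    (k₁ k₂ r : ℝ) :
    let H : Matrix (Fin 4) (Fin 4) ℂ := Matrix.diagonal ![0,0,1,1]
    let K : Matrix (Fin 4) (Fin 4) ℂ :=
      !![0,0,(k₁:ℂ),0; 0,0,0,(k₂:ℂ); (k₁:ℂ),0,0,(r:ℂ); 0,(k₂:ℂ),(r:ℂ),0]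
    let A : Matrix (Fin 4) (Fin 4) ℂ := H + Complex.I • K
    (∀ z ∈ NR A, 0 ≤ z.re ∧ z.re ≤ 1) ∧
    (0:ℂ) ∈ frontier (NR A) ∧
    {x : Fin 4 → ℂ | star x ⬝ᵥ x = 1 ∧ fA A x = 0} =
      {x : Fin 4 → ℂ | star x ⬝ᵥ x = 1 ∧ x 2 = 0 ∧ x 3 = 0} := by
  intro H K A
  have hre : ∀ x, (fA A x).re = normSq (x 2) + normSq (x 3) := re_fA_concrete k₁ k₂ r
  have hNR : ∀ z ∈ NR A, 0 ≤ z.re ∧ z.re ≤ 1 := by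
    rintro z ⟨x, hx, rfl⟩
    have hunit := re_star_dotProduct_self x
    rw [hx, Fin.sum_univ_four, one_re] at hunit
    rw [hre]
    constructor <;> linarith [normSq_nonneg (x 0), normSq_nonneg (x 1), normSq_nonneg (x 2),
      normSq_nonneg (x 3)]
  have hzero : {x : Fin 4 → ℂ | star x ⬝ᵥ x = 1 ∧ fA A x = 0} =
      {x : Fin 4 → ℂ | star x ⬝ᵥ x = 1 ∧ x 2 = 0 ∧ x 3 = 0} := by
    ext x
    refine ⟨fun ⟨hx, hf⟩ => ⟨hx, ?_⟩, fun ⟨hx, h2, h3⟩ => ⟨hx, fA_concrete_eq_zero k₁ k₂ r h2 h3⟩⟩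
    have hsum := hre x
    rw [hf, zero_re] at hsum
    obtain ⟨h2, h3⟩ := (add_eq_zero_iff_of_nonneg (normSq_nonneg _) (normSq_nonneg _)).1 hsum.symm
    exact ⟨normSq_eq_zero.1 h2, normSq_eq_zero.1 h3⟩
  have e₁_mem : ![1, 0, 0, 0] ∈ {x : Fin 4 → ℂ | star x ⬝ᵥ x = 1 ∧ fA A x = 0} := by
    rw [hzero]
    simp [dotProduct, Fin.sum_univ_four]
  exact ⟨hNR, mem_frontier_of_subset_re_nonneg (fun z hz => (hNR z hz).1) ⟨_, e₁_mem⟩ rfl, hzero⟩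

theorem concrete_4x4_range_and_preimage_of_zero
    (k₁ k₂ r : ℝ) (hk : k₂ < k₁) (hk₂ : 0 < k₂) (hr : 0 < r) :
    let H : Matrix (Fin 4) (Fin 4) ℂ := Matrix.diagonal ![0,0,1,1]
    let K : Matrix (Fin 4) (Fin 4) ℂ :=
      !![0,0,(k₁:ℂ),0; 0,0,0,(k₂:ℂ); (k₁:ℂ),0,0,(r:ℂ); 0,(k₂:ℂ),(r:ℂ),0]
    let A : Matrix (Fin 4) (Fin 4) ℂ := H + Complex.I • K
    (∀ z ∈ NR A, 0 ≤ z.re ∧ z.re ≤ 1) ∧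
    (0:ℂ) ∈ frontier (NR A) ∧
    {x : Fin 4 → ℂ | star x ⬝ᵥ x = 1 ∧ fA A x = 0} =
      {x : Fin 4 → ℂ | star x ⬝ᵥ x = 1 ∧ x 2 = 0 ∧ x 3 = 0} :=
  concrete_4x4_range_and_preimage_of_zero_general k₁ k₂ r
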